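/- arXiv:1012.0999 — 2 statements merged into one kernel-verified Lean document; each statement's English description precedes it below -/
import Mathlib

section
/- Let U, A, K : ℝ³ × ℝ → ℝ³ and n : ℝ³ × ℝ → ℝ be smooth, and suppose ∂_t n + ∇·K = 0 and ∂_t A + (U·∇)A + (∇U)ᵀA = 0 (advection of the one-form A). Then the one-form density nA satisfies, pointwise, ∂_t(nA) + (U·∇)(nA) + (∇U)ᵀ(nA) + (∇·U)(nA) = −A ∇·(K − nU). -/
open MeasureTheory

noncomputable section

/-- 3-vectors, with coordinates indexed by `Fin 3`. -/
abbrev V3 := Fin 3 → ℝ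

/-- Euclidean dot product on `ℝ³`. -/
def dot3 (a b : V3) : ℝ := ∑ i, a i * b i

/-- Cross product on `ℝ³`. -/
def cross3 (a b : V3) : V3 :=
  ![a 1 * b 2 - a 2 * b 1, a 2 * b 0 - a 0 * b 2, a 0 * b 1 - a 1 * b 0]

/-- Partial derivative of a scalar field in the `i`-th coordinate direction. -/
def pd (i : Fin 3) (g : V3 → ℝ) (x : V3) : ℝ := fderiv ℝ g x (Pi.single i 1)

/-- Divergence of a vector field on `ℝ³`. -/
def vdiv (F : V3 → V3) (x : V3) : ℝ := ∑ i, pd i (fun y => F y i) x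

/-- Curl of a vector field on `ℝ³`. -/
def vcurl (F : V3 → V3) (x : V3) : V3 :=
  ![pd 1 (fun y => F y 2) x - pd 2 (fun y => F y 1) x,
    pd 2 (fun y => F y 0) x - pd 0 (fun y => F y 2) x,
    pd 0 (fun y => F y 1) x - pd 1 (fun y => F y 0) x]


lemma slice_x_diff {f : V3 → ℝ → ℝ} (hf : ContDiff ℝ (⊤ : ℕ∞) (fun p : V3 × ℝ => f p.1 p.2))
    (t : ℝ) : Differentiable ℝ (fun y => f y t) :=
  (hf.differentiable (by simp)).comp (differentiable_id.prodMk (differentiable_const t))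

lemma slice_t_diff {f : V3 → ℝ → ℝ} (hf : ContDiff ℝ (⊤ : ℕ∞) (fun p : V3 × ℝ => f p.1 p.2))
    (x : V3) : Differentiable ℝ (fun τ => f x τ) :=
  (hf.differentiable (by simp)).comp ((differentiable_const x).prodMk differentiable_id)

lemma pd_mul {f g : V3 → ℝ} {x : V3} (hf : DifferentiableAt ℝ f x)
    (hg : DifferentiableAt ℝ g x) (i : Fin 3) :
    pd i (fun y => f y * g y) x = pd i f x * g x + f x * pd i g x := by
  unfold pd
  rw [fderiv_fun_mul hf hg]
  simp only [ContinuousLinearMap.add_apply, ContinuousLinearMap.smul_apply, smul_eq_mul]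
  ring

lemma pd_sub {f g : V3 → ℝ} {x : V3} (hf : DifferentiableAt ℝ f x)
    (hg : DifferentiableAt ℝ g x) (i : Fin 3) :
    pd i (fun y => f y - g y) x = pd i f x - pd i g x := by
  unfold pd
  rw [fderiv_fun_sub hf hg]
  simp

/-- evolution of the one-form density `nA`:
`(∂_t + £_U)(nA) = −A ∇·(K − nU)`, given `∂_t n + ∇·K = 0` and Lie
transport of the one-form `A`. -/
theorem one_form_density_nA_evolution
    (U A K : V3 → ℝ → V3) (n : V3 → ℝ → ℝ)
    (hU : ContDiff ℝ (⊤ : ℕ∞) (fun p : V3 × ℝ => U p.1 p.2))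
    (hA : ContDiff ℝ (⊤ : ℕ∞) (fun p : V3 × ℝ => A p.1 p.2))
    (hK : ContDiff ℝ (⊤ : ℕ∞) (fun p : V3 × ℝ => K p.1 p.2))
    (hn : ContDiff ℝ (⊤ : ℕ∞) (fun p : V3 × ℝ => n p.1 p.2))
    (hcont : ∀ (x : V3) (t : ℝ),
      deriv (fun τ => n x τ) t + ∑ j, pd j (fun y => K y t j) x = 0)
    (hadvA : ∀ (x : V3) (t : ℝ) (i : Fin 3),
      deriv (fun τ => A x τ i) t
          + dot3 (U x t) (fun j => pd j (fun y => A y t i) x)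
          + dot3 (A x t) (fun j => pd i (fun y => U y t j) x) = 0) :
    ∀ (x : V3) (t : ℝ) (i : Fin 3),
      deriv (fun τ => n x τ * A x τ i) t
          + dot3 (U x t) (fun j => pd j (fun y => n y t * A y t i) x)
          + dot3 (fun j => n x t * A x t j) (fun j => pd i (fun y => U y t j) x)
          + (∑ j, pd j (fun y => U y t j) x) * (n x t * A x t i)
        = -(A x t i) * ∑ j, pd j (fun y => K y t j - n y t * U y t j) x  := by
  intro x t i
  have hAc : ∀ j : Fin 3, ContDiff ℝ (⊤ : ℕ∞) (fun p : V3 × ℝ => A p.1 p.2 j) :=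
    fun j => (contDiff_pi.mp hA) j
  have hUc : ∀ j : Fin 3, ContDiff ℝ (⊤ : ℕ∞) (fun p : V3 × ℝ => U p.1 p.2 j) :=
    fun j => (contDiff_pi.mp hU) j
  have hnx : DifferentiableAt ℝ (fun y => n y t) x := slice_x_diff hn t x
  have hAx : ∀ j, DifferentiableAt ℝ (fun y => A y t j) x :=
    fun j => slice_x_diff (f := fun y τ => A y τ j) (hAc j) t x
  have hUx : ∀ j, DifferentiableAt ℝ (fun y => U y t j) x :=
    fun j => slice_x_diff (f := fun y τ => U y τ j) (hUc j) t x
  have hnt : DifferentiableAt ℝ (fun τ => n x τ) t := slice_t_diff hn x t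
  have hAt : DifferentiableAt ℝ (fun τ => A x τ i) t := slice_t_diff (f := fun y τ => A y τ i) (hAc i) x t
  have hderiv : deriv (fun τ => n x τ * A x τ i) t
      = deriv (fun τ => n x τ) t * A x t i + n x t * deriv (fun τ => A x τ i) t :=
    deriv_mul hnt hAt
  have hpd : ∀ j, pd j (fun y => n y t * A y t i) x
      = pd j (fun y => n y t) x * A x t i + n x t * pd j (fun y => A y t i) x :=
    fun j => pd_mul hnx (hAx i) j
  have hpdK : ∀ j, pd j (fun y => K y t j - n y t * U y t j) x
      = pd j (fun y => K y t j) x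
        - (pd j (fun y => n y t) x * U x t j + n x t * pd j (fun y => U y t j) x) := by
    intro j
    rw [pd_sub (g := fun y => n y t * U y t j) (slice_x_diff (f := fun y τ => K y τ j) (contDiff_pi.mp hK j) t x) (hnx.mul (hUx j)) j,
      pd_mul hnx (hUx j) j]
  have h1 := hcont x t
  have h2 := hadvA x t i
  simp only [dot3, Fin.sum_univ_three] at h1 h2 ⊢
  rw [hderiv, hpd 0, hpd 1, hpd 2, hpdK 0, hpdK 1, hpdK 2]
  linear_combination A x t i * h1 + n x t * h2
end
end

section
/- Let ρ > 0 and n be smooth real-valued fields and U, A : ℝ³ × ℝ → ℝ³ smooth vector fields on ℝ³ × ℝ satisfying: ∂_t ρ + ∇·(ρU) = 0, ∂_t n + ∇·(nU) = 0, and ∂_t A + (U·∇)A + (∇U)ᵀA = 0. Let γ : ℝ × ℝ → ℝ³ be a smooth loop advected by U. Then the circulation ∫₀¹ (1 + n/ρ)(γ(t,s),t) A(γ(t,s),t)·∂_s γ(t,s) ds is constant in time. -/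
open MeasureTheory

noncomputable section

lemma clm_apply_sum (L : V3 →L[ℝ] ℝ) (v : V3) : L v = ∑ j, v j * L (Pi.single j 1) := by
  have hv : v = ∑ j, v j • (Pi.single j 1 : V3) := by
    funext k
    simp [Finset.sum_apply, Pi.single_apply]
  conv_lhs => rw [hv]
  rw [map_sum]
  simp [smul_eq_mul]

lemma slice_diff (G : V3 × ℝ → ℝ) (hG : Differentiable ℝ G) (t : ℝ) :
    Differentiable ℝ (fun y => G (y, t)) :=
  hG.comp (differentiable_id.prodMk (differentiable_const t))

lemma hasDerivAt_slice2 (G : V3 × ℝ → ℝ) (hG : Differentiable ℝ G) (x : V3) (t : ℝ) :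
    HasDerivAt (fun τ => G (x, τ)) (fderiv ℝ G (x, t) ((0 : V3), (1 : ℝ))) t := by
  have h1 : HasDerivAt (fun τ : ℝ => ((x, τ) : V3 × ℝ)) ((0 : V3), (1 : ℝ)) t :=
    (hasDerivAt_const t x).prodMk (hasDerivAt_id t)
  exact (hG (x, t)).hasFDerivAt.comp_hasDerivAt t h1

lemma pd_slice (G : V3 × ℝ → ℝ) (hG : Differentiable ℝ G) (x : V3) (t : ℝ) (j : Fin 3) :
    pd j (fun y => G (y, t)) x = fderiv ℝ G (x, t) ((Pi.single j 1 : V3), (0 : ℝ)) := by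
  have h1 : HasFDerivAt (fun y : V3 => ((y, t) : V3 × ℝ))
      ((ContinuousLinearMap.id ℝ V3).prod (0 : V3 →L[ℝ] ℝ)) x :=
    (hasFDerivAt_id x).prodMk (hasFDerivAt_const t x)
  have h2 := HasFDerivAt.comp (f := fun y : V3 => ((y, t) : V3 × ℝ)) x (hG (x, t)).hasFDerivAt h1
  rw [pd, show (fun y => G (y, t)) = G ∘ (fun y : V3 => ((y, t) : V3 × ℝ)) from rfl, h2.fderiv]
  rfl

lemma key_deriv (G : V3 × ℝ → ℝ) (hG : Differentiable ℝ G) (x : ℝ → V3) (v : V3) (t : ℝ)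
    (hx : HasDerivAt x v t) :
    HasDerivAt (fun τ => G (x τ, τ))
      ((∑ j, v j * pd j (fun y => G (y, t)) (x t)) + deriv (fun τ => G (x t, τ)) t) t := by
  have h1 : HasDerivAt (fun τ => ((x τ, τ) : V3 × ℝ)) (v, 1) t := hx.prodMk (hasDerivAt_id t)
  have h2 := (hG (x t, t)).hasFDerivAt.comp_hasDerivAt (f := fun τ => ((x τ, τ) : V3 × ℝ)) t h1
  refine h2.congr_deriv ?_
  symm
  have hsplit : ((v, (1:ℝ)) : V3 × ℝ) = ((v, 0) : V3 × ℝ) + ((0 : V3), (1:ℝ)) := by simp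
  rw [hsplit, map_add]
  congr 1
  · set L2 : V3 →L[ℝ] ℝ := (fderiv ℝ G (x t, t)).comp (ContinuousLinearMap.inl ℝ V3 ℝ) with hL2
    have hv0 : fderiv ℝ G (x t, t) ((v, 0) : V3 × ℝ) = L2 v := rfl
    rw [hv0, clm_apply_sum L2 v]
    refine Finset.sum_congr rfl fun j _ => ?_
    rw [pd_slice G hG (x t) t j]
    rfl
  · exact (hasDerivAt_slice2 G hG (x t) t).deriv

lemma key_deriv_space (G : V3 → ℝ) (hG : Differentiable ℝ G) (x : ℝ → V3) (v : V3) (s : ℝ)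
    (hx : HasDerivAt x v s) :
    HasDerivAt (fun σ => G (x σ)) (∑ j, v j * pd j G (x s)) s := by
  have h2 := (hG (x s)).hasFDerivAt.comp_hasDerivAt s hx
  exact h2.congr_deriv (clm_apply_sum (fderiv ℝ G (x s)) v)

lemma clairaut (Φ : ℝ × ℝ → ℝ) (hΦ : ContDiff ℝ (⊤ : ℕ∞) Φ) (t s : ℝ) :
    HasDerivAt (fun τ => deriv (fun σ => Φ (τ, σ)) s)
      (deriv (fun σ => deriv (fun τ' => Φ (τ', σ)) t) s) t := by
  have hd : Differentiable ℝ Φ := hΦ.differentiable (by simp)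
  set f' : ℝ × ℝ → (ℝ × ℝ) →L[ℝ] ℝ := fderiv ℝ Φ with hf'
  have hf'c : ContDiff ℝ (⊤ : ℕ∞) f' := hΦ.fderiv_right (by simp)
  have hf'd : Differentiable ℝ f' := hf'c.differentiable (by simp)
  -- M1 : deriv in second slot
  have M1 : ∀ p : ℝ × ℝ, deriv (fun σ => Φ (p.1, σ)) p.2 = f' p ((0:ℝ), (1:ℝ)) := by
    intro p
    have h1 : HasDerivAt (fun σ : ℝ => ((p.1, σ) : ℝ × ℝ)) ((0:ℝ), (1:ℝ)) p.2 :=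
      (hasDerivAt_const p.2 p.1).prodMk (hasDerivAt_id p.2)
    exact ((hd (p.1, p.2)).hasFDerivAt.comp_hasDerivAt (f := fun σ : ℝ => ((p.1, σ) : ℝ × ℝ)) p.2 h1).deriv
  have M2 : ∀ p : ℝ × ℝ, deriv (fun τ => Φ (τ, p.2)) p.1 = f' p ((1:ℝ), (0:ℝ)) := by
    intro p
    have h1 : HasDerivAt (fun τ : ℝ => ((τ, p.2) : ℝ × ℝ)) ((1:ℝ), (0:ℝ)) p.1 :=
      (hasDerivAt_id p.1).prodMk (hasDerivAt_const p.1 p.2)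
    exact ((hd (p.1, p.2)).hasFDerivAt.comp_hasDerivAt (f := fun τ : ℝ => ((τ, p.2) : ℝ × ℝ)) p.1 h1).deriv
  set f'' : (ℝ × ℝ) →L[ℝ] (ℝ × ℝ) →L[ℝ] ℝ := fderiv ℝ f' (t, s) with hf''
  have hsnd : HasFDerivAt f' f'' (t, s) := (hf'd (t, s)).hasFDerivAt
  -- evaluation maps
  have M3 : HasDerivAt (fun τ => f' (τ, s) ((0:ℝ), (1:ℝ))) (f'' ((1:ℝ),(0:ℝ)) ((0:ℝ),(1:ℝ))) t := by
    have hev := (ContinuousLinearMap.apply ℝ ℝ (((0:ℝ), (1:ℝ)) : ℝ × ℝ)).hasFDerivAt.comp (t, s) hsnd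
    have h1 : HasDerivAt (fun τ : ℝ => ((τ, s) : ℝ × ℝ)) ((1:ℝ), (0:ℝ)) t :=
      (hasDerivAt_id t).prodMk (hasDerivAt_const t s)
    exact hev.comp_hasDerivAt (f := fun τ : ℝ => ((τ, s) : ℝ × ℝ)) t h1
  have M4 : HasDerivAt (fun σ => f' (t, σ) ((1:ℝ), (0:ℝ))) (f'' ((0:ℝ),(1:ℝ)) ((1:ℝ),(0:ℝ))) s := by
    have hev := (ContinuousLinearMap.apply ℝ ℝ (((1:ℝ), (0:ℝ)) : ℝ × ℝ)).hasFDerivAt.comp (t, s) hsnd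
    have h1 : HasDerivAt (fun σ : ℝ => ((t, σ) : ℝ × ℝ)) ((0:ℝ), (1:ℝ)) s :=
      (hasDerivAt_const s t).prodMk (hasDerivAt_id s)
    exact hev.comp_hasDerivAt (f := fun σ : ℝ => ((t, σ) : ℝ × ℝ)) s h1
  have hsymm : f'' ((1:ℝ),(0:ℝ)) ((0:ℝ),(1:ℝ)) = f'' ((0:ℝ),(1:ℝ)) ((1:ℝ),(0:ℝ)) :=
    second_derivative_symmetric (fun y => (hd y).hasFDerivAt) hsnd _ _
  have hfun1 : (fun τ => deriv (fun σ => Φ (τ, σ)) s) = fun τ => f' (τ, s) ((0:ℝ),(1:ℝ)) := by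
    funext τ; exact M1 (τ, s)
  have hfun2 : deriv (fun σ => deriv (fun τ' => Φ (τ', σ)) t) s
      = f'' ((0:ℝ),(1:ℝ)) ((1:ℝ),(0:ℝ)) := by
    have : (fun σ => deriv (fun τ' => Φ (τ', σ)) t) = fun σ => f' (t, σ) ((1:ℝ),(0:ℝ)) := by
      funext σ; exact M2 (t, σ)
    rw [this, M4.deriv]
  rw [hfun1, hfun2, ← hsymm]
  exact M3

/-- the circulation `∮ (1 + n/ρ) A·dx` along a loop advected by
`U` is constant in time, given continuity equations for `ρ` and `n` and Lie
transport of the one-form `A`. -/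
theorem frozen_in_circulation_conserved
    (ρ n : V3 → ℝ → ℝ) (U A : V3 → ℝ → V3)
    (hρ : ContDiff ℝ (⊤ : ℕ∞) (fun p : V3 × ℝ => ρ p.1 p.2))
    (hρpos : ∀ (x : V3) (t : ℝ), 0 < ρ x t)
    (hn : ContDiff ℝ (⊤ : ℕ∞) (fun p : V3 × ℝ => n p.1 p.2))
    (hU : ContDiff ℝ (⊤ : ℕ∞) (fun p : V3 × ℝ => U p.1 p.2))
    (hA : ContDiff ℝ (⊤ : ℕ∞) (fun p : V3 × ℝ => A p.1 p.2))
    -- continuity equations for ρ and n: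
    (hcontρ : ∀ (x : V3) (t : ℝ),
      deriv (fun τ => ρ x τ) t + ∑ j, pd j (fun y => ρ y t * U y t j) x = 0)
    (hcontn : ∀ (x : V3) (t : ℝ),
      deriv (fun τ => n x τ) t + ∑ j, pd j (fun y => n y t * U y t j) x = 0)
    -- Lie transport of the magnetic potential one-form A:
    (hadvA : ∀ (x : V3) (t : ℝ) (i : Fin 3),
      deriv (fun τ => A x τ i) t
          + dot3 (U x t) (fun j => pd j (fun y => A y t i) x)
          + dot3 (A x t) (fun j => pd i (fun y => U y t j) x) = 0)
    -- a smooth loop advected by U: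
    (γ : ℝ → ℝ → V3)
    (hγ : ContDiff ℝ (⊤ : ℕ∞) (fun p : ℝ × ℝ => γ p.1 p.2))
    (hγper : ∀ t s : ℝ, γ t (s + 1) = γ t s)
    (hγadv : ∀ t s : ℝ, deriv (fun τ => γ τ s) t = U (γ t s) t) :
    ∀ t₁ t₂ : ℝ,
      (∫ s in (0:ℝ)..1,
          (1 + n (γ t₁ s) t₁ / ρ (γ t₁ s) t₁) *
            dot3 (A (γ t₁ s) t₁) (deriv (fun σ => γ t₁ σ) s))
        = ∫ s in (0:ℝ)..1,
            (1 + n (γ t₂ s) t₂ / ρ (γ t₂ s) t₂) *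
              dot3 (A (γ t₂ s) t₂) (deriv (fun σ => γ t₂ σ) s) := by
  -- basic differentiability facts
  have hγd : Differentiable ℝ (fun p : ℝ × ℝ => γ p.1 p.2) := hγ.differentiable (by simp)
  have hpath : ∀ s' : ℝ, Differentiable ℝ (fun τ => γ τ s') := fun s' =>
    hγd.comp (differentiable_id.prodMk (differentiable_const s'))
  have hloop : ∀ t' : ℝ, Differentiable ℝ (fun σ => γ t' σ) := fun t' =>
    hγd.comp ((differentiable_const t').prodMk differentiable_id)
  have hxadv : ∀ t' s' : ℝ, HasDerivAt (fun τ => γ τ s') (U (γ t' s') t') t' := by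
    intro t' s'
    have h := (hpath s' t').hasDerivAt
    rwa [hγadv t' s'] at h
  have hUc : ∀ i, ContDiff ℝ (⊤ : ℕ∞) (fun p : V3 × ℝ => U p.1 p.2 i) := fun i => contDiff_pi.1 hU i
  have hAc : ∀ i, ContDiff ℝ (⊤ : ℕ∞) (fun p : V3 × ℝ => A p.1 p.2 i) := fun i => contDiff_pi.1 hA i
  have hUd : ∀ i, Differentiable ℝ (fun p : V3 × ℝ => U p.1 p.2 i) := fun i =>
    (hUc i).differentiable (by simp)
  have hAd : ∀ i, Differentiable ℝ (fun p : V3 × ℝ => A p.1 p.2 i) := fun i =>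
    (hAc i).differentiable (by simp)
  have hnd : Differentiable ℝ (fun p : V3 × ℝ => n p.1 p.2) := hn.differentiable (by simp)
  have hρd : Differentiable ℝ (fun p : V3 × ℝ => ρ p.1 p.2) := hρ.differentiable (by simp)
  -- projection lemma for the loop derivative
  have hproj : ∀ (t' s' : ℝ) (i : Fin 3),
      deriv (fun σ => γ t' σ i) s' = deriv (fun σ => γ t' σ) s' i := by
    intro t' s' i
    have h := ((hloop t') s').hasDerivAt
    exact ((ContinuousLinearMap.proj (R := ℝ) (φ := fun _ : Fin 3 => ℝ)
      i).hasFDerivAt.comp_hasDerivAt s' h).deriv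
  -- the key pointwise claim: for each s, the integrand is constant in t
  have key : ∀ (s : ℝ) (t₁ t₂ : ℝ),
      (1 + n (γ t₁ s) t₁ / ρ (γ t₁ s) t₁) * dot3 (A (γ t₁ s) t₁) (deriv (fun σ => γ t₁ σ) s)
        = (1 + n (γ t₂ s) t₂ / ρ (γ t₂ s) t₂) *
            dot3 (A (γ t₂ s) t₂) (deriv (fun σ => γ t₂ σ) s) := by
    intro s t₁ t₂
    set g : ℝ → ℝ := fun t =>
      (1 + n (γ t s) t / ρ (γ t s) t) * dot3 (A (γ t s) t) (deriv (fun σ => γ t σ) s) with hg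
    suffices h : ∀ t, HasDerivAt g 0 t by
      exact is_const_of_deriv_eq_zero (fun t => (h t).differentiableAt)
        (fun t => (h t).deriv) t₁ t₂
    intro t
    -- abbreviations at the point (γ t s, t)
    set x : V3 := γ t s with hx
    set B : V3 := deriv (fun σ => γ t σ) s with hB
    set D : ℝ := ∑ j, pd j (fun y => U y t j) x with hD
    -- product rule for continuity equations
    have hprodrule : ∀ (f : V3 → ℝ → ℝ),
        Differentiable ℝ (fun p : V3 × ℝ => f p.1 p.2) → ∀ j : Fin 3,
        pd j (fun y => f y t * U y t j) x
          = f x t * pd j (fun y => U y t j) x + U x t j * pd j (fun y => f y t) x := by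
      intro f hf j
      have h1 : DifferentiableAt ℝ (fun y => f y t) x :=
        (slice_diff (fun p : V3 × ℝ => f p.1 p.2) hf t) x
      have h2 : DifferentiableAt ℝ (fun y => U y t j) x :=
        (slice_diff (fun p : V3 × ℝ => U p.1 p.2 j) (hUd j) t) x
      rw [pd, fderiv_fun_mul h1 h2]
      simp [pd, smul_eq_mul]
    -- derivative of n along the path
    have hN : HasDerivAt (fun τ => n (γ τ s) τ) (-(n x t * D)) t := by
      have h0 := key_deriv (fun p : V3 × ℝ => n p.1 p.2) hnd (fun τ => γ τ s)
        (U x t) t (hxadv t s)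
      convert h0 using 1
      have hct := hcontn x t
      have hsum : ∑ j, pd j (fun y => n y t * U y t j) x
          = n x t * D + ∑ j, U x t j * pd j (fun y => n y t) x := by
        rw [Finset.sum_congr rfl fun j _ => hprodrule n hnd j, Finset.sum_add_distrib, hD,
          Finset.mul_sum]
      rw [hsum] at hct
      linarith
    have hR : HasDerivAt (fun τ => ρ (γ τ s) τ) (-(ρ x t * D)) t := by
      have h0 := key_deriv (fun p : V3 × ℝ => ρ p.1 p.2) hρd (fun τ => γ τ s)
        (U x t) t (hxadv t s)
      convert h0 using 1
      have hct := hcontρ x t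
      have hsum : ∑ j, pd j (fun y => ρ y t * U y t j) x
          = ρ x t * D + ∑ j, U x t j * pd j (fun y => ρ y t) x := by
        rw [Finset.sum_congr rfl fun j _ => hprodrule ρ hρd j, Finset.sum_add_distrib, hD,
          Finset.mul_sum]
      rw [hsum] at hct
      linarith
    -- the ratio n/ρ is advected
    have hq : HasDerivAt (fun τ => n (γ τ s) τ / ρ (γ τ s) τ) 0 t := by
      have h0 := hN.fun_div hR (ne_of_gt (hρpos x t))
      refine h0.congr_deriv ?_
      have hρne : ρ x t ≠ 0 := ne_of_gt (hρpos x t)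
      rw [div_eq_zero_iff]
      left
      rw [← hx]
      ring
    -- derivative of A_i along the path
    have hAi : ∀ i : Fin 3, HasDerivAt (fun τ => A (γ τ s) τ i)
        (-(∑ j, A x t j * pd i (fun y => U y t j) x)) t := by
      intro i
      have h0 := key_deriv (fun p : V3 × ℝ => A p.1 p.2 i) (hAd i) (fun τ => γ τ s)
        (U x t) t (hxadv t s)
      convert h0 using 1
      have hct := hadvA x t i
      simp only [dot3] at hct
      linarith
    -- derivative of B_i in time (Clairaut + chain rule)
    have hBi : ∀ i : Fin 3, HasDerivAt (fun τ => deriv (fun σ => γ τ σ) s i)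
        (∑ j, B j * pd j (fun y => U y t i) x) t := by
      intro i
      have hΦ : ContDiff ℝ (⊤ : ℕ∞) (fun p : ℝ × ℝ => γ p.1 p.2 i) := contDiff_pi.1 hγ i
      have hcl := clairaut (fun p : ℝ × ℝ => γ p.1 p.2 i) hΦ t s
      -- rewrite the function being differentiated
      have hfun : (fun τ => deriv (fun σ => γ τ σ i) s) = fun τ => deriv (fun σ => γ τ σ) s i := by
        funext τ; exact hproj τ s i
      -- rewrite the inner time-derivative using the advection law
      have hinner : (fun σ => deriv (fun τ' => γ τ' σ i) t) = fun σ => U (γ t σ) t i := by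
        funext σ
        exact ((ContinuousLinearMap.proj (R := ℝ) (φ := fun _ : Fin 3 => ℝ)
          i).hasFDerivAt.comp_hasDerivAt t (hxadv t σ)).deriv
      have hval : deriv (fun σ => U (γ t σ) t i) s = ∑ j, B j * pd j (fun y => U y t i) x := by
        have hsd := key_deriv_space (fun y => U y t i)
          (slice_diff (fun p : V3 × ℝ => U p.1 p.2 i) (hUd i) t) (fun σ => γ t σ) B s
          ((hloop t s).hasDerivAt)
        exact hsd.deriv
      rw [hfun, hinner, hval] at hcl
      exact hcl
    -- the dot product term
    have hS : HasDerivAt (fun τ => ∑ i, A (γ τ s) τ i * deriv (fun σ => γ τ σ) s i)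
        (0 : ℝ) t := by
      have h0 : HasDerivAt (fun τ => ∑ i, A (γ τ s) τ i * deriv (fun σ => γ τ σ) s i)
          (∑ i, ((-(∑ j, A x t j * pd i (fun y => U y t j) x)) * B i
            + A x t i * (∑ j, B j * pd j (fun y => U y t i) x))) t := by
        refine HasDerivAt.fun_sum fun i _ => ?_
        have := (hAi i).fun_mul (hBi i)
        simpa [hB] using this
      convert h0 using 1
      symm
      have h1 : ∀ i : Fin 3, (-(∑ j, A x t j * pd i (fun y => U y t j) x)) * B i
          + A x t i * (∑ j, B j * pd j (fun y => U y t i) x)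
          = ∑ j, (A x t i * (B j * pd j (fun y => U y t i) x)
              - A x t j * pd i (fun y => U y t j) x * B i) := by
        intro i
        rw [Finset.sum_sub_distrib, ← Finset.sum_mul, ← Finset.mul_sum]
        ring
      rw [Finset.sum_congr rfl fun i _ => h1 i]
      simp only [Finset.sum_sub_distrib]
      rw [sub_eq_zero, Finset.sum_comm]
      exact Finset.sum_congr rfl fun j _ => Finset.sum_congr rfl fun i _ => by ring
    -- assemble
    have hgd : HasDerivAt g ((0 + 0) * (∑ i, A x t i * deriv (fun σ => γ t σ) s i)
        + (1 + n x t / ρ x t) * 0) t := by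
      have := ((hasDerivAt_const t (1 : ℝ)).fun_add hq).fun_mul hS
      simpa [hg, dot3, hx] using this
    simpa using hgd
  intro t₁ t₂
  apply intervalIntegral.integral_congr
  intro s _
  exact key s t₁ t₂
end
end
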